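/- arXiv:1103.4555 — 10 statements merged into one kernel-verified Lean document; each statement's English description precedes it below -/
import Mathlib

section
/- Let p be an odd prime and m, k positive integers such that m/gcd(m,k) is odd. Then the map x ↦ x^(p^k + 1) on the finite field F_{p^m} is two-to-one on nonzero elements: every nonzero element in its image has exactly two preimages. -/
/-!
In a field with `q` elements, nonzero `x, y` satisfy `x ^ e = y ^ e` iff
`(x / y) ^ gcd(e, q - 1) = 1`, because `(x / y) ^ (q - 1) = 1`. For `e = p ^ k + 1`, `q = p ^ m`
this gcd is `2`: it is even, and it divides `gcd(p ^ (2k) - 1, p ^ m - 1) = p ^ gcd(2k, m) - 1`,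
where `gcd(2k, m) = gcd(k, m)` since `m / gcd(m, k)` is odd; hence it divides both `p ^ k - 1` and
`p ^ k + 1`. So the fibre through `y` is `{y, -y}`, and `y ≠ -y` because `q` is odd.
-/

theorem Nat.gcd_two_mul_right_of_odd_div_gcd {m k : ℕ} (h : Odd (m / m.gcd k)) :
    m.gcd (2 * k) = m.gcd k := by
  set g := m.gcd k
  have hg : 0 < g := Nat.pos_of_ne_zero fun h0 => by simp [h0] at h
  have hcop : (m / g).Coprime (2 * (k / g)) :=
    h.coprime_two_right.mul_right (Nat.coprime_div_gcd_div_gcd hg)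
  calc m.gcd (2 * k) = (m / g * g).gcd (2 * (k / g) * g) := by
        rw [Nat.div_mul_cancel (Nat.gcd_dvd_left m k), mul_assoc,
          Nat.div_mul_cancel (Nat.gcd_dvd_right m k)]
    _ = g := by rw [Nat.gcd_mul_right, hcop.gcd_eq_one, one_mul]

theorem Nat.gcd_pow_add_one_pow_sub_one_eq_two {a m k : ℕ} (ha : Odd a)
    (h : Odd (m / m.gcd k)) : (a ^ k + 1).gcd (a ^ m - 1) = 2 := by
  set d := (a ^ k + 1).gcd (a ^ m - 1)
  have two_dvd : 2 ∣ d :=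
    Nat.dvd_gcd (ha.pow.add_one).two_dvd (Nat.Odd.sub_odd ha.pow odd_one).two_dvd
  have dvd_sq : d ∣ a ^ (2 * k) - 1 := by
    rw [mul_comm, pow_mul, ← one_pow 2, Nat.sq_sub_sq]
    exact (Nat.gcd_dvd_left _ _).mul_right _
  have dvd_sub : d ∣ a ^ k - 1 := by
    have := Nat.dvd_gcd dvd_sq (Nat.gcd_dvd_right (a ^ k + 1) (a ^ m - 1))
    rw [Nat.pow_sub_one_gcd_pow_sub_one, Nat.gcd_comm, Nat.gcd_two_mul_right_of_odd_div_gcd h,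
      Nat.gcd_comm, ← Nat.pow_sub_one_gcd_pow_sub_one] at this
    exact this.trans (Nat.gcd_dvd_left _ _)
  have : d ∣ 2 := by
    have := Nat.dvd_sub (Nat.gcd_dvd_left _ _) dvd_sub
    rwa [show a ^ k + 1 - (a ^ k - 1) = 2 by have := ha.pow (n := k).pos; omega] at this
  exact Nat.dvd_antisymm this two_dvd

namespace FiniteField

variable {F : Type*} [Field F] [Fintype F]

theorem pow_eq_pow_iff_pow_gcd_eq_pow_gcd {x y : F} (hx : x ≠ 0) (hy : y ≠ 0) (e : ℕ) :
    x ^ e = y ^ e ↔ x ^ e.gcd (Fintype.card F - 1) = y ^ e.gcd (Fintype.card F - 1) := by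
  have hxy : (x / y) ^ (Fintype.card F - 1) = 1 := pow_card_sub_one_eq_one _ (div_ne_zero hx hy)
  simp only [← div_eq_one_iff_eq (pow_ne_zero _ hy), ← div_pow, pow_gcd_eq_one, hxy, and_true]

theorem setOf_pow_eq_pow_eq_pair {e : ℕ} (he : e.gcd (Fintype.card F - 1) = 2) (he₀ : e ≠ 0)
    {y : F} (hy : y ≠ 0) : {x : F | x ^ e = y ^ e} = {y, -y} := by
  ext x
  have hx : x ^ e = y ^ e → x ≠ 0 := by
    rintro hxy rfl
    exact pow_ne_zero e hy (hxy.symm.trans (zero_pow he₀))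
  simp only [Set.mem_ofPred_eq, Set.mem_insert_iff, Set.mem_singleton_iff]
  constructor
  · intro hxy
    rwa [pow_eq_pow_iff_pow_gcd_eq_pow_gcd (hx hxy) hy, he, sq_eq_sq_iff_eq_or_eq_neg] at hxy
  · have he_even : Even e := even_iff_two_dvd.mpr (he ▸ Nat.gcd_dvd_left _ _)
    rintro (rfl | rfl)
    exacts [rfl, he_even.neg_pow y]

theorem ringChar_ne_two_of_gcd_eq_two {e : ℕ} (he : e.gcd (Fintype.card F - 1) = 2) :
    ringChar F ≠ 2 := by
  have h2 : 2 ∣ Fintype.card F - 1 := he ▸ Nat.gcd_dvd_right _ _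
  have hq : 0 < Fintype.card F := Fintype.card_pos
  rw [Ne, even_card_iff_char_two]
  omega

theorem ncard_setOf_pow_eq {e : ℕ} (he : e.gcd (Fintype.card F - 1) = 2) (he₀ : e ≠ 0)
    {c : F} (hc : c ≠ 0) (hc_pow : ∃ y : F, y ^ e = c) : {x : F | x ^ e = c}.ncard = 2 := by
  obtain ⟨y, rfl⟩ := hc_pow
  have hy : y ≠ 0 := by rintro rfl; exact hc (zero_pow he₀)
  rw [setOf_pow_eq_pow_eq_pair he he₀ hy, Set.ncard_pair]
  exact fun h => hy ((Ring.eq_self_iff_eq_zero_of_char_ne_two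
    (ringChar_ne_two_of_gcd_eq_two he)).mp h.symm)

end FiniteField

theorem stmt_1_general (p m k : ℕ) (hodd : Odd p)
    (h : Odd (m / Nat.gcd m k))
    (F : Type*) [Field F] [Fintype F] (hF : Fintype.card F = p ^ m) :
    ∀ c : F, c ≠ 0 → (∃ x : F, x ^ (p ^ k + 1) = c) →
      {x : F | x ^ (p ^ k + 1) = c}.ncard = 2 := by
  have hgcd : (p ^ k + 1).gcd (Fintype.card F - 1) = 2 := by
    rw [hF]
    exact Nat.gcd_pow_add_one_pow_sub_one_eq_two hodd h
  exact fun c hc hc_pow => FiniteField.ncard_setOf_pow_eq hgcd (Nat.succ_ne_zero _) hc hc_pow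

theorem stmt_1 (p m k : ℕ) (hp : p.Prime) (hodd : Odd p)
    (hm : 0 < m) (hk : 0 < k) (h : Odd (m / Nat.gcd m k))
    (F : Type*) [Field F] [Fintype F] (hF : Fintype.card F = p ^ m) :
    ∀ c : F, c ≠ 0 → (∃ x : F, x ^ (p ^ k + 1) = c) →
      {x : F | x ^ (p ^ k + 1) = c}.ncard = 2 :=
  stmt_1_general p m k hodd h F hF
end

section
/- Let p be an odd prime and m, k positive integers such that m/gcd(m,k) is odd. Then the map x ↦ x^(p^k) + x is a bijection (permutation) of the finite field F_{p^m}. -/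
theorem stmt_2 (p m k : ℕ) (hp : p.Prime) (hodd : Odd p)
    (hm : 0 < m) (hk : 0 < k) (h : Odd (m / Nat.gcd m k))
    (F : Type*) [Field F] [Fintype F] (hF : Fintype.card F = p ^ m) :
    Function.Bijective (fun x : F => x ^ (p ^ k) + x) := by
  -- characteristic of F is p
  have hchar : CharP F p := by
    haveI := ringChar.charP F
    obtain ⟨n, hq, hcard⟩ := FiniteField.card F (ringChar F)
    have hdvd : ringChar F ∣ p ^ m := by
      rw [← hF, hcard]; exact dvd_pow_self _ n.2.ne'
    have hqp : ringChar F = p :=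
      (Nat.prime_dvd_prime_iff_eq hq hp).mp (hq.dvd_of_dvd_pow hdvd)
    rw [← hqp]; infer_instance
  have hp' : Fact p.Prime := ⟨hp⟩
  rw [← Finite.injective_iff_bijective]
  intro a b hab
  simp only at hab
  set x := a - b with hx
  have key : x ^ (p ^ k) = -x := by
    have : a ^ (p ^ k) - b ^ (p ^ k) = -(a - b) := by linear_combination hab
    rw [← sub_pow_char_pow] at this
    exact this
  have hxz : x = 0 := by
    -- iterate: x ^ (p ^ (k*j)) = (-1)^j * x
    have iter : ∀ j : ℕ, x ^ (p ^ (k * j)) = (-1 : F) ^ j * x := by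
      intro j
      induction j with
      | zero => simp
      | succ j ih =>
        have : p ^ (k * (j + 1)) = p ^ (k * j) * p ^ k := by ring
        rw [this, pow_mul, ih, mul_pow, ← pow_mul, mul_comm j (p ^ k), pow_mul,
          (hodd.pow).neg_one_pow, key, pow_succ]
        ring
    -- p ^ (m * s) power fixes x
    have fix : ∀ s : ℕ, x ^ (p ^ (m * s)) = x := by
      intro s
      have := FiniteField.pow_card_pow (K := F) s x
      rwa [hF, ← pow_mul] at this
    set g := Nat.gcd m k with hg
    have hgm : g ∣ m := Nat.gcd_dvd_left m k
    have hgk : g ∣ k := Nat.gcd_dvd_right m k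
    have hgpos : 0 < g := Nat.gcd_pos_of_pos_left k hm
    obtain ⟨m', hm'⟩ := hgm
    obtain ⟨k', hk'⟩ := hgk
    have heq : k * (m / g) = m * (k / g) := by
      rw [hm', hk', Nat.mul_div_cancel_left _ hgpos, Nat.mul_div_cancel_left _ hgpos]
      ring
    have h1 : x ^ (p ^ (k * (m / g))) = (-1 : F) ^ (m / g) * x := iter (m / g)
    rw [heq, fix (k / g), h.neg_one_pow, neg_one_mul] at h1
    -- x = -x
    have h2 : (2 : F) * x = 0 := by rw [two_mul]; nth_rewrite 1 [h1]; ring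
    have h2ne : (2 : F) ≠ 0 := by
      intro hc
      have hpd : p ∣ 2 := (CharP.cast_eq_zero_iff F p 2).mp (by exact_mod_cast hc)
      have hp2 : p = 2 := (Nat.prime_dvd_prime_iff_eq hp Nat.prime_two).mp hpd
      obtain ⟨t, ht⟩ := hodd
      omega
    rcases mul_eq_zero.mp h2 with hc | hc
    · exact absurd hc h2ne
    · exact hc
  exact sub_eq_zero.mp hxz
end

section
/- Let p be an odd prime, m, k positive integers with m/gcd(m,k) odd, α a non-square element of F_{p^m}, and σ a field automorphism of F_{p^m}. Define on F_{p^m} × F_{p^m} the product (a,b)*(c,d) = (a∘c + α·σ(b∘d), ad + bc), where x∘y = x^(p^k)·y + y^(p^k)·x. Then * has no zero divisors: if (a,b)*(c,d) = (0,0) then (a,b) = (0,0) or (c,d) = (0,0). -/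
/-!
With `q = p ^ k` we have `x ∘ y = x * y * (x ^ (q - 1) + y ^ (q - 1))`. Since
`gcd (p ^ k - 1) (p ^ m - 1) = p ^ g - 1` for `g = gcd m k` and `(p ^ m - 1) / (p ^ g - 1)` is a
sum of `m / g` odd powers, hence odd, `-1` is not a `(q - 1)`-th power in `F`; so `x ∘ y = 0`
forces `x = 0` or `y = 0`. If `b, d ≠ 0` and `(a, b) * (c, d) = 0`, the second coordinate gives
`a = t * b`, `c = -(t * d)`, and the first one becomes `α * σ (b ∘ d) = t ^ (q + 1) * (b ∘ d)`.
The quadratic character is invariant under `σ` and `t ^ (q + 1)` is a square, so comparing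
quadratic characters of both sides contradicts `α` being a non-square.
-/

open Finset

lemma Odd.geom_sum_nat {a n : ℕ} (ha : Odd a) (hn : Odd n) : Odd (∑ i ∈ range n, a ^ i) := by
  rwa [odd_sum_iff_odd_card_odd, filter_true_of_mem fun i _ ↦ ha.pow, card_range]

lemma Nat.odd_pow_sub_one_div_sub_one {a n : ℕ} (ha : Odd a) (ha1 : a ≠ 1) (hn : Odd n) :
    Odd ((a ^ n - 1) / (a - 1)) := by
  have : 2 ≤ a := by have := ha.pos; omega
  rw [← Nat.geomSum_eq this]
  exact ha.geom_sum_nat hn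

lemma Nat.odd_pow_sub_one_div_gcd {p m k : ℕ} (hp : Odd p) (hp1 : p ≠ 1)
    (h : Odd (m / m.gcd k)) : Odd ((p ^ m - 1) / (p ^ k - 1).gcd (p ^ m - 1)) := by
  have hg : m.gcd k ≠ 0 := fun hg ↦ by simp [hg] at h
  rw [Nat.pow_sub_one_gcd_pow_sub_one, Nat.gcd_comm k m, show p ^ m = (p ^ m.gcd k) ^ (m / m.gcd k) by
    rw [← pow_mul, Nat.mul_div_cancel' (Nat.gcd_dvd_left m k)]]
  exact Nat.odd_pow_sub_one_div_sub_one hp.pow (by simp [hp1, hg]) h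

lemma FiniteField.pow_ne_neg_one {F : Type*} [Field F] [Fintype F] (hF : ringChar F ≠ 2)
    {n : ℕ} (hn : Odd ((Fintype.card F - 1) / n.gcd (Fintype.card F - 1))) (z : F) :
    z ^ n ≠ -1 := by
  set D := Fintype.card F - 1
  have hG : n.gcd D ≠ 0 := fun hG ↦ by simp [hG] at hn
  obtain ⟨r, hr⟩ := Nat.gcd_dvd_left n D
  intro hz
  have hw : (z ^ r) ^ n.gcd D = -1 := by rw [← pow_mul, mul_comm, ← hr, hz]
  have hw0 : z ^ r ≠ 0 := fun h0 ↦ by simp [h0, zero_pow hG] at hw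
  have h1 : (z ^ r) ^ D = 1 := FiniteField.pow_card_sub_one_eq_one (z ^ r) hw0
  rw [← Nat.mul_div_cancel' (Nat.gcd_dvd_right n D), pow_mul, hw, hn.neg_one_pow] at h1
  exact Ring.neg_one_ne_one_of_char_ne_two hF h1

lemma eq_zero_or_eq_zero_of_pow_mul_add_pow_mul_eq_zero {K : Type*} [Field K] {q : ℕ}
    (hq : 0 < q) (h : ∀ z : K, z ^ (q - 1) ≠ -1) {x y : K}
    (hxy : x ^ q * y + y ^ q * x = 0) : x = 0 ∨ y = 0 := by
  by_contra! hne
  obtain ⟨hx, hy⟩ := hne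
  have hfactor : x * y * (x ^ (q - 1) + y ^ (q - 1)) = 0 := by
    obtain ⟨n, rfl⟩ := Nat.exists_eq_add_of_lt hq
    rw [← hxy]
    simp only [zero_add, Nat.add_sub_cancel]
    ring
  apply h (x / y)
  rw [div_pow, div_eq_iff (pow_ne_zero _ hy)]
  linear_combination (mul_eq_zero.mp hfactor).resolve_left (mul_ne_zero hx hy)

lemma quadraticChar_ringEquiv_apply {F : Type*} [Field F] [Fintype F] [DecidableEq F]
    (σ : F ≃+* F) (x : F) : quadraticChar F (σ x) = quadraticChar F x := by
  by_cases hsq : IsSquare x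
  · by_cases hx : x = 0
    · simp [hx]
    rw [(quadraticChar_one_iff_isSquare hx).2 hsq,
      quadraticChar_one_iff_isSquare (σ.map_ne_zero_iff.2 hx)]
    exact hsq.map σ
  · rw [quadraticChar_neg_one_iff_not_isSquare.2 hsq, quadraticChar_neg_one_iff_not_isSquare]
    exact fun h ↦ hsq (by simpa using h.map σ.symm)

lemma FiniteField.mul_map_ne_mul_of_not_isSquare {F : Type*} [Field F] [Fintype F] {α u s : F}
    (hα : ¬IsSquare α) (σ : F ≃+* F) (hu : IsSquare u) (hs : s ≠ 0) : α * σ s ≠ u * s := by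
  classical
  intro heq
  have hχ := congrArg (quadraticChar F) heq
  rw [map_mul, map_mul, quadraticChar_neg_one_iff_not_isSquare.2 hα,
    quadraticChar_ringEquiv_apply] at hχ
  have hχs : quadraticChar F s ≠ 0 := quadraticChar_eq_zero_iff.not.2 hs
  by_cases hu0 : u = 0
  · rw [hu0, quadraticChar_zero] at hχ
    omega
  · rw [(quadraticChar_one_iff_isSquare hu0).2 hu] at hχ
    omega

theorem stmt_4_general (p m k : ℕ) (hp : p.Prime) (hodd : Odd p)
    (h : Odd (m / Nat.gcd m k))
    (F : Type*) [Field F] [Fintype F] (hF : Fintype.card F = p ^ m)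
    (α : F) (hα : ¬ IsSquare α) (σ : F ≃+* F) :
    ∀ a b c d : F,
      (a ^ (p ^ k) * c + c ^ (p ^ k) * a + α * σ (b ^ (p ^ k) * d + d ^ (p ^ k) * b) = 0 ∧
        a * d + b * c = 0) →
      (a = 0 ∧ b = 0) ∨ (c = 0 ∧ d = 0) := by
  have hchar : ringChar F ≠ 2 := fun h2 ↦ hα (FiniteField.isSquare_of_char_two h2 α)
  have hcirc (x y : F) : x ^ p ^ k * y + y ^ p ^ k * x = 0 → x = 0 ∨ y = 0 :=
    eq_zero_or_eq_zero_of_pow_mul_add_pow_mul_eq_zero (pow_pos hodd.pos k) <|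
      FiniteField.pow_ne_neg_one hchar <| by
        rw [hF]; exact Nat.odd_pow_sub_one_div_gcd hodd hp.one_lt.ne' h
  intro a b c d ⟨h1, h2⟩
  by_cases hb : b = 0
  · subst hb
    rcases mul_eq_zero.mp (by simpa using h2 : a * d = 0) with rfl | rfl
    · exact Or.inl ⟨rfl, rfl⟩
    · simpa using hcirc a c (by simpa using h1)
  by_cases hd : d = 0
  · subst hd
    exact Or.inr ⟨(mul_eq_zero.mp (by simpa using h2 : b * c = 0)).resolve_left hb, rfl⟩
  exfalso
  set t := a / b
  have ha : a = t * b := (div_mul_cancel₀ a hb).symm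
  have hc : c = -(t * d) := mul_left_cancel₀ hb (by linear_combination h2 - d * ha)
  refine FiniteField.mul_map_ne_mul_of_not_isSquare hα σ
    ((hodd.pow : Odd (p ^ k)).add_one.isSquare_pow t) (fun h0 ↦ (hcirc b d h0).elim hb hd) ?_
  rw [ha, hc, hodd.pow.neg_pow, mul_pow, mul_pow] at h1
  linear_combination h1

theorem stmt_4 (p m k : ℕ) (hp : p.Prime) (hodd : Odd p)
    (hm : 0 < m) (hk : 0 < k) (h : Odd (m / Nat.gcd m k))
    (F : Type*) [Field F] [Fintype F] (hF : Fintype.card F = p ^ m)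
    (α : F) (hα : ¬ IsSquare α) (σ : F ≃+* F) :
    ∀ a b c d : F,
      (a ^ (p ^ k) * c + c ^ (p ^ k) * a + α * σ (b ^ (p ^ k) * d + d ^ (p ^ k) * b) = 0 ∧
        a * d + b * c = 0) →
      (a = 0 ∧ b = 0) ∨ (c = 0 ∧ d = 0) :=
  stmt_4_general p m k hp hodd h F hF α hα σ
end

section
/- Let m ≥ 2 be an even integer and k a positive integer with gcd(k,m) = 1. Let α ∈ F_{2^m} be nonzero and σ an automorphism of F_{2^m}. Define f : F_{2^m} × F_{2^m} → F_{2^m} × F_{2^m} by f(x,y) = (x^(2^k+1) + α·σ(y^(2^k+1)), xy). Then f is APN (i.e., for every nonzero (a,b) and every (c,d), the equation f(X + (a,b)) + f(X) = (c,d) has at most two solutions X) if and only if α cannot be written as a^(2^k+1)·(t^(2^k)+t)^(1−σ) with a, t ∈ F_{2^m} (where (·)^(1−σ) means u/σ(u)). -/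
/-! In characteristic 2, `D_a f X = f (X + a) + f X` is affine in `X`, so each of its fibres is
empty or a coset of the kernel of its linear part, and `f` is APN iff that kernel is `{0, a}`.
For `a = (a₁, a₂) ≠ 0` the second coordinate forces a kernel element to be `z • a`, and the
first then reads `a₁^(q+1) w + α σ(a₂^(q+1) w) = 0` with `q = 2^k`, `w = z^q + z`. A solution
with `w ≠ 0` is precisely a representation `α = (a₁ / σ a₂)^(q+1) w^(1-σ)`; and `w = 0`
means `z ∈ 𝔽₂`, because `gcd(k, m) = 1` makes `𝔽₂` the fixed field of `x ↦ x^q`. -/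

namespace FiniteField

variable {K : Type*} [Field K] [Fintype K]

theorem pow_sub_one_eq_one_of_pow_pow_eq_self {n m k : ℕ} (hK : Fintype.card K = n ^ m)
    (hkm : Nat.gcd k m = 1) {z : K} (hz0 : z ≠ 0) (hz : z ^ n ^ k = z) : z ^ (n - 1) = 1 := by
  have hn : n ≠ 0 := by
    rintro rfl
    have := hK ▸ Fintype.one_lt_card (α := K)
    rcases m with _ | m <;> simp at this
  have hk : z ^ (n ^ k - 1) = 1 := by
    apply mul_right_cancel₀ hz0
    rw [← pow_succ, Nat.sub_add_cancel (Nat.one_le_pow _ _ (Nat.pos_of_ne_zero hn)), hz, one_mul]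
  have hm : z ^ (n ^ m - 1) = 1 := hK ▸ pow_card_sub_one_eq_one z hz0
  simpa [hkm] using pow_gcd_eq_one.mpr ⟨hk, hm⟩

theorem eq_zero_or_one_of_pow_two_pow_add_self_eq_zero [CharP K 2] {m k : ℕ}
    (hK : Fintype.card K = 2 ^ m) (hkm : Nat.gcd k m = 1) {z : K} (hz : z ^ 2 ^ k + z = 0) :
    z = 0 ∨ z = 1 := by
  refine or_iff_not_imp_left.mpr fun hz0 => ?_
  simpa using pow_sub_one_eq_one_of_pow_pow_eq_self hK hkm hz0 (CharTwo.add_eq_zero.mp hz)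

end FiniteField

theorem Prod.exists_eq_smul_of_mul_eq_mul {F : Type*} [Field F] {a v : F × F} (ha : a ≠ 0)
    (h : a.1 * v.2 = a.2 * v.1) : ∃ z : F, v = z • a := by
  obtain ⟨a, b⟩ := a
  obtain ⟨u, v⟩ := v
  dsimp only at h
  rcases eq_or_ne a 0 with rfl | ha'
  · have hb : b ≠ 0 := by simpa using ha
    have hu : u = 0 := by simpa [hb] using h.symm
    exact ⟨v / b, by simp [hu, hb]⟩
  · refine ⟨u / a, Prod.ext (by simp [ha']) ?_⟩
    simp only [Prod.smul_mk, smul_eq_mul]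
    field_simp
    linear_combination h

section TwistedGoldMap

variable {F : Type*} [Field F]

def twistedGoldMap (k : ℕ) (α : F) (σ : F ≃+* F) (X : F × F) : F × F :=
  (X.1 ^ (2 ^ k + 1) + α * σ (X.2 ^ (2 ^ k + 1)), X.1 * X.2)

variable [CharP F 2] (k : ℕ) (α : F) (σ : F ≃+* F)

theorem twistedGoldMap_add_smul_add (X a : F × F) (z : F) :
    twistedGoldMap k α σ (X + z • a + a) + twistedGoldMap k α σ (X + z • a) =
      twistedGoldMap k α σ (X + a) + twistedGoldMap k α σ X +
        (a.1 ^ (2 ^ k + 1) * (z ^ 2 ^ k + z) +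
          α * σ (a.2 ^ (2 ^ k + 1) * (z ^ 2 ^ k + z)), 0) := by
  obtain ⟨x, y⟩ := X
  obtain ⟨a, b⟩ := a
  simp only [twistedGoldMap, Prod.smul_mk, Prod.mk_add_mk, smul_eq_mul, Prod.mk.injEq, pow_succ,
    map_add, map_mul, map_pow, add_pow_char_pow, mul_pow]
  constructor <;> grind

theorem exists_eq_add_smul_of_twistedGoldMap_derivative_eq {a X X' : F × F} (ha : a ≠ 0)
    (h : twistedGoldMap k α σ (X' + a) + twistedGoldMap k α σ X' =
      twistedGoldMap k α σ (X + a) + twistedGoldMap k α σ X) :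
    ∃ z : F, X' = X + z • a := by
  obtain ⟨z, hz⟩ := Prod.exists_eq_smul_of_mul_eq_mul ha (v := X' - X) <| by
    have h2 := congrArg Prod.snd h
    simp only [twistedGoldMap, Prod.snd_add, Prod.fst_add] at h2
    simp only [Prod.fst_sub, Prod.snd_sub]
    grind
  exact ⟨z, by rw [← hz, add_sub_cancel]⟩

theorem pow_two_pow_add_self_eq_zero_of_not_exists
    (hα : ¬ ∃ a t : F, α = a ^ (2 ^ k + 1) * ((t ^ (2 ^ k) + t) * (σ (t ^ (2 ^ k) + t))⁻¹))
    {a : F × F} (ha : a ≠ 0) {z : F}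
    (h : a.1 ^ (2 ^ k + 1) * (z ^ 2 ^ k + z) + α * σ (a.2 ^ (2 ^ k + 1) * (z ^ 2 ^ k + z)) = 0) :
    z ^ 2 ^ k + z = 0 := by
  obtain ⟨a, b⟩ := a
  dsimp only at h
  by_contra hw
  rcases eq_or_ne b 0 with rfl | hb
  · have ha' : a ≠ 0 := by simpa using ha
    simp_all
  · refine hα ⟨a / σ b, z, ?_⟩
    have hσb : σ b ≠ 0 := (map_ne_zero σ).mpr hb
    have hσw : σ (z ^ 2 ^ k + z) ≠ 0 := (map_ne_zero σ).mpr hw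
    rw [map_mul, map_pow] at h
    rw [div_pow, ← mul_assoc, eq_mul_inv_iff_mul_eq₀ hσw, div_mul_eq_mul_div,
      eq_div_iff (pow_ne_zero _ hσb)]
    linear_combination (CharTwo.add_eq_zero.mp h).symm

theorem three_le_ncard_twistedGoldMap_derivative [Fintype F] {A t : F} (hα : α ≠ 0)
    (hαAt : α = A ^ (2 ^ k + 1) * ((t ^ (2 ^ k) + t) * (σ (t ^ (2 ^ k) + t))⁻¹)) :
    3 ≤ {X : F × F | twistedGoldMap k α σ (X + (A, 1)) + twistedGoldMap k α σ X =
      twistedGoldMap k α σ (A, 1) + twistedGoldMap k α σ 0}.ncard := by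
  have hw : t ^ 2 ^ k + t ≠ 0 := fun hw => hα (by simpa [hw] using hαAt)
  have ht : ({0, 1, t} : Set F).ncard = 3 := by
    refine Set.ncard_eq_three.mpr ⟨0, 1, t, zero_ne_one, ?_, ?_, rfl⟩ <;> rintro rfl
    · simp at hw
    · simp [CharTwo.add_self_eq_zero] at hw
  have hsub : (fun z : F => z • ((A, 1) : F × F)) '' {0, 1, t} ⊆
      {X | twistedGoldMap k α σ (X + (A, 1)) + twistedGoldMap k α σ X =
        twistedGoldMap k α σ (A, 1) + twistedGoldMap k α σ 0} := by
    rintro _ ⟨z, hz, rfl⟩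
    have := twistedGoldMap_add_smul_add k α σ 0 (A, 1) z
    simp only [zero_add] at this
    rw [Set.mem_ofPred_eq, this, add_eq_left, one_pow, one_mul]
    rcases hz with rfl | rfl | rfl
    · simp
    · simp [CharTwo.add_self_eq_zero]
    · rw [hαAt, mul_assoc, mul_assoc, inv_mul_cancel₀ ((map_ne_zero σ).mpr hw), mul_one,
        CharTwo.add_self_eq_zero, Prod.mk_zero_zero]
  calc 3 = ((fun z : F => z • ((A, 1) : F × F)) '' {0, 1, t}).ncard := by
        rw [Set.ncard_image_of_injective _ (smul_left_injective F (by simp)), ht]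
    _ ≤ _ := Set.ncard_le_ncard hsub

theorem ncard_twistedGoldMap_derivative_le_two [Fintype F] {m : ℕ} (hF : Fintype.card F = 2 ^ m)
    (hkm : Nat.gcd k m = 1)
    (hα : ¬ ∃ a t : F, α = a ^ (2 ^ k + 1) * ((t ^ (2 ^ k) + t) * (σ (t ^ (2 ^ k) + t))⁻¹))
    {a : F × F} (ha : a ≠ 0) (c : F × F) :
    {X : F × F | twistedGoldMap k α σ (X + a) + twistedGoldMap k α σ X = c}.ncard ≤ 2 := by
  set S := {X : F × F | twistedGoldMap k α σ (X + a) + twistedGoldMap k α σ X = c}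
  rcases S.eq_empty_or_nonempty with hS | ⟨X, hX⟩
  · simp [hS]
  have hsub : S ⊆ {X, X + a} := by
    intro X' hX'
    obtain ⟨z, rfl⟩ :=
      exists_eq_add_smul_of_twistedGoldMap_derivative_eq k α σ ha (hX'.trans hX.symm)
    have hz := twistedGoldMap_add_smul_add k α σ X a z
    rw [Set.mem_ofPred_eq.mp hX', Set.mem_ofPred_eq.mp hX, left_eq_add, Prod.mk_eq_zero] at hz
    rcases FiniteField.eq_zero_or_one_of_pow_two_pow_add_self_eq_zero hF hkm
      (pow_two_pow_add_self_eq_zero_of_not_exists k α σ hα ha hz.1) with rfl | rfl <;> simp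
  calc _ ≤ ({X, X + a} : Set (F × F)).ncard := Set.ncard_le_ncard hsub
    _ ≤ 2 := (Set.ncard_insert_le _ _).trans (by simp)

end TwistedGoldMap

theorem stmt_7_general (m k : ℕ)
    (hkm : Nat.gcd k m = 1)
    (F : Type*) [Field F] [Fintype F] (hF : Fintype.card F = 2 ^ m)
    (α : F) (hα : α ≠ 0) (σ : F ≃+* F)
    (f : F × F → F × F)
    (hf : ∀ x y : F, f (x, y) = (x ^ (2 ^ k + 1) + α * σ (y ^ (2 ^ k + 1)), x * y)) :
    (∀ ab : F × F, ab ≠ 0 → ∀ cd : F × F,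
        {X : F × F | f (X + ab) + f X = cd}.ncard ≤ 2) ↔
    ¬ ∃ a t : F, α = a ^ (2 ^ k + 1) *
        ((t ^ (2 ^ k) + t) * (σ (t ^ (2 ^ k) + t))⁻¹) := by
  have : CharP F 2 := charP_of_card_eq_prime_pow hF
  obtain rfl : f = twistedGoldMap k α σ := funext fun X => hf X.1 X.2
  constructor
  · rintro hAPN ⟨A, t, hαAt⟩
    exact absurd ((three_le_ncard_twistedGoldMap_derivative k α σ hα hαAt).trans
      (hAPN (A, 1) (by simp) _)) (by norm_num)
  · exact fun hα' a ha c => ncard_twistedGoldMap_derivative_le_two k α σ hF hkm hα' ha c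

theorem stmt_7 (m k : ℕ) (hm : 2 ≤ m) (hme : Even m) (hk : 0 < k)
    (hkm : Nat.gcd k m = 1)
    (F : Type*) [Field F] [Fintype F] (hF : Fintype.card F = 2 ^ m)
    (α : F) (hα : α ≠ 0) (σ : F ≃+* F)
    (f : F × F → F × F)
    (hf : ∀ x y : F, f (x, y) = (x ^ (2 ^ k + 1) + α * σ (y ^ (2 ^ k + 1)), x * y)) :
    (∀ ab : F × F, ab ≠ 0 → ∀ cd : F × F,
        {X : F × F | f (X + ab) + f X = cd}.ncard ≤ 2) ↔
    ¬ ∃ a t : F, α = a ^ (2 ^ k + 1) *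
        ((t ^ (2 ^ k) + t) * (σ (t ^ (2 ^ k) + t))⁻¹) :=
  stmt_7_general m k hkm F hF α hα σ f hf
end

section
/- Let m ≥ 2 be even and k a positive integer with gcd(k,m) = 1. Then gcd(2^k + 1, 2^m − 1) = 3. -/
theorem stmt_8 (m k : ℕ) (hm : 2 ≤ m) (hme : Even m) (hk : 0 < k)
    (hkm : Nat.gcd k m = 1) :
    Nat.gcd (2 ^ k + 1) (2 ^ m - 1) = 3 := by
  obtain ⟨m', rfl⟩ : ∃ m', m = 2 * m' := by
    rcases hme with ⟨a, rfl⟩; exact ⟨a, by ring⟩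
  set d := Nat.gcd (2 ^ k + 1) (2 ^ (2 * m') - 1) with hd
  -- k is odd
  have hkodd : k % 2 = 1 := by
    rcases Nat.even_or_odd k with hke | hko
    · exfalso
      have : 2 ∣ Nat.gcd k (2 * m') := Nat.dvd_gcd hke.two_dvd ⟨m', rfl⟩
      rw [hkm] at this; exact absurd this (by decide)
    · exact Nat.odd_iff.mp hko
  obtain ⟨j, rfl⟩ : ∃ j, k = 2 * j + 1 := ⟨k / 2, by omega⟩
  have hm' : 1 ≤ m' := by omega
  -- 3 divides 2^k + 1
  have h3k : 3 ∣ 2 ^ (2 * j + 1) + 1 := by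
    have h4 : (4 : ℕ) ^ j ≡ 1 ^ j [MOD 3] := Nat.ModEq.pow j (by decide)
    have : 2 ^ (2 * j + 1) + 1 ≡ 2 * 1 + 1 [MOD 3] := by
      calc 2 ^ (2 * j + 1) + 1 = 2 * 4 ^ j + 1 := by
            rw [pow_succ, pow_mul]; norm_num; ring
        _ ≡ 2 * 1 ^ j + 1 [MOD 3] := ((h4.mul_left 2).add_right 1)
        _ = 2 * 1 + 1 := by ring
    simpa using (Nat.modEq_zero_iff_dvd).mp (this.trans (by decide))
  -- 3 divides 2^(2m') - 1
  have h3m : 3 ∣ 2 ^ (2 * m') - 1 := by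
    have h4 : (4 : ℕ) ^ m' ≡ 1 ^ m' [MOD 3] := Nat.ModEq.pow m' (by decide)
    have h1 : 1 ≤ 2 ^ (2 * m') := Nat.one_le_two_pow
    have : 2 ^ (2 * m') ≡ 1 [MOD 3] := by
      calc 2 ^ (2 * m') = 4 ^ m' := by rw [pow_mul]; norm_num
        _ ≡ 1 ^ m' [MOD 3] := h4
        _ = 1 := one_pow m'
    exact (Nat.modEq_iff_dvd' h1).mp this.symm
  have h3d : 3 ∣ d := Nat.dvd_gcd h3k h3m
  -- d divides 2^(2k) - 1
  have hdd1 : d ∣ 2 ^ (2 * (2 * j + 1)) - 1 := by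
    have h1 : (1 : ℕ) ≤ 2 ^ (2 * j + 1) := Nat.one_le_two_pow
    have : (2 ^ (2 * j + 1) + 1) * (2 ^ (2 * j + 1) - 1) = 2 ^ (2 * (2 * j + 1)) - 1 := by
      have h2 : 2 ^ (2 * (2 * j + 1)) = 2 ^ (2 * j + 1) * 2 ^ (2 * j + 1) := by
        rw [← pow_add]; ring_nf
      have h1' : 1 ≤ 2 ^ (2 * j + 1) * 2 ^ (2 * j + 1) :=
        le_trans h1 (Nat.le_mul_of_pos_left _ (by positivity))
      rw [h2]
      zify [h1, h1']
      ring
    exact this ▸ Dvd.dvd.mul_right (Nat.gcd_dvd_left _ _) _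
  have hdd2 : d ∣ 2 ^ (2 * m') - 1 := Nat.gcd_dvd_right _ _
  -- pass to ZMod d
  have hdpos : 0 < d := Nat.gcd_pos_of_pos_left _ (by positivity)
  haveI : NeZero d := ⟨by omega⟩
  have key : ∀ n : ℕ, d ∣ 2 ^ n - 1 → (2 : ZMod d) ^ n = 1 := by
    intro n hn
    have h1 : (1 : ℕ) ≤ 2 ^ n := Nat.one_le_two_pow
    have : ((2 ^ n - 1 : ℕ) : ZMod d) = 0 := (ZMod.natCast_eq_zero_iff _ _).mpr hn
    have h2 : ((2 ^ n : ℕ) : ZMod d) = ((1 : ℕ) : ZMod d) := by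
      have := congrArg (· + ((1 : ℕ) : ZMod d)) this
      simpa [← Nat.cast_add, Nat.sub_add_cancel h1] using this
    simpa using h2
  have ho1 : orderOf (2 : ZMod d) ∣ 2 * (2 * j + 1) := orderOf_dvd_of_pow_eq_one (key _ hdd1)
  have ho2 : orderOf (2 : ZMod d) ∣ 2 * m' := orderOf_dvd_of_pow_eq_one (key _ hdd2)
  have hgcd2 : Nat.gcd (2 * (2 * j + 1)) (2 * m') = 2 := by
    rw [Nat.gcd_mul_left]
    have : Nat.gcd (2 * j + 1) m' = 1 := Nat.Coprime.coprime_dvd_right ⟨2, by ring⟩ hkm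
    rw [this]
  have ho : orderOf (2 : ZMod d) ∣ 2 := hgcd2 ▸ Nat.dvd_gcd ho1 ho2
  have h4 : (2 : ZMod d) ^ 2 = 1 := orderOf_dvd_iff_pow_eq_one.mp ho
  have hd3 : d ∣ 3 := by
    have : ((3 : ℕ) : ZMod d) = 0 := by
      have : (4 : ZMod d) = 1 := by have := h4; norm_num at this ⊢; linear_combination this
      push_cast
      linear_combination this
    exact (ZMod.natCast_eq_zero_iff _ _).mp this
  exact Nat.dvd_antisymm hd3 h3d
end

section
/- Let m ≥ 2 be even, k a positive integer with gcd(k,m) = 1, and α ∈ F_{2^m} a nonzero element that is not a cube. Let i be an even nonnegative integer. Then the function f(x,y) = (x^(2^k+1) + α·y^((2^k+1)·2^i), xy) on F_{2^m} × F_{2^m} is APN. -/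
theorem stmt_9 (m k i : ℕ) (hm : 2 ≤ m) (hme : Even m) (hk : 0 < k)
    (hkm : Nat.gcd k m = 1) (hi : Even i)
    (F : Type*) [Field F] [Fintype F] (hF : Fintype.card F = 2 ^ m)
    (α : F) (hα : α ≠ 0) (hcube : ¬ ∃ c : F, c ^ 3 = α)
    (f : F × F → F × F)
    (hf : ∀ x y : F, f (x, y) =
      (x ^ (2 ^ k + 1) + α * y ^ ((2 ^ k + 1) * 2 ^ i), x * y)) :
    ∀ ab : F × F, ab ≠ 0 → ∀ cd : F × F,
      {X : F × F | f (X + ab) + f X = cd}.ncard ≤ 2 := by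
  -- characteristic 2 setup
  have hm0 : m ≠ 0 := by omega
  have h2 : (2 : F) = 0 := by
    have hc := FiniteField.cast_card_eq_zero F
    rw [hF] at hc
    push_cast at hc
    exact (pow_eq_zero_iff hm0).mp hc
  haveI hfact : Fact (Nat.Prime 2) := ⟨Nat.prime_two⟩
  have hr2 : ringChar F = 2 := by
    have hd : ringChar F ∣ 2 := ringChar.dvd (by exact_mod_cast h2)
    rcases (Nat.dvd_prime Nat.prime_two).mp hd with h | h
    · exfalso
      have : ((1 : ℕ) : F) = 0 := (ringChar.spec F 1).mpr (by rw [h])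
      simpa using this
    · exact h
  haveI hchar2 : CharP F 2 := ringChar.of_eq hr2
  have hchar : ∀ s t : F, s + t = 0 → s = t := by
    intro s t h
    linear_combination h - t * h2
  have F1 : ∀ s t : F, (s + t) ^ (2 ^ k) = s ^ (2 ^ k) + t ^ (2 ^ k) := fun s t =>
    add_pow_char_pow s t 2 k
  have FQ : ∀ s t : F, (s + t) ^ (2 ^ i) = s ^ (2 ^ i) + t ^ (2 ^ i) := fun s t =>
    add_pow_char_pow s t 2 i
  -- fixed points of x ↦ x^(2^k) are 0 and 1
  have hcard : ∀ z : F, z ^ (2 ^ m) = z := fun z => by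
    have := FiniteField.pow_card z; rwa [hF] at this
  have hstep : ∀ (z : F) (n : ℕ), z ^ 2 ^ (m + n) = z ^ 2 ^ n := fun z n => by
    rw [pow_add, pow_mul, hcard]
  have hred : ∀ (z : F) (n : ℕ), z ^ 2 ^ n = z ^ 2 ^ (n % m) := by
    intro z n
    induction n using Nat.strong_induction_on with
    | _ n ih =>
      rcases lt_or_ge n m with h | h
      · rw [Nat.mod_eq_of_lt h]
      · rw [Nat.mod_eq_sub_mod h, ← ih (n - m) (by omega), ← hstep z (n - m)]
        congr 2
        omega
  have lemA : ∀ t : F, t ^ (2 ^ k) = t → t = 0 ∨ t = 1 := by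
    intro t ht
    have hiter : ∀ j : ℕ, t ^ 2 ^ (k * j) = t := by
      intro j
      induction j with
      | zero => simp
      | succ j ih => rw [Nat.mul_succ, pow_add, pow_mul, ih, ht]
    have hco : Nat.Coprime k m := hkm
    have htot := Nat.ModEq.pow_totient hco
    have htpos : 0 < Nat.totient m := Nat.totient_pos.mpr (by omega)
    set j := k ^ (Nat.totient m - 1) with hj
    have hkj : k * j = k ^ Nat.totient m := by
      rw [hj, ← pow_succ', Nat.sub_add_cancel htpos]
    have hmod : (k * j) % m = 1 := by
      rw [hkj]
      have h1m : (1 : ℕ) % m = 1 := Nat.mod_eq_of_lt (by omega)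
      calc k ^ Nat.totient m % m = 1 % m := htot
        _ = 1 := h1m
    have ht2 : t ^ 2 = t := by
      have h1 := hiter j
      rw [hred t (k * j), hmod] at h1
      simpa using h1
    rcases mul_eq_zero.mp (show t * (t - 1) = 0 from by linear_combination ht2) with h | h
    · exact Or.inl h
    · exact Or.inr (sub_eq_zero.mp h)
  have lemB : ∀ b v : F, b ≠ 0 → v ^ (2 ^ k) * b + v * b ^ (2 ^ k) = 0 → v = 0 ∨ v = b := by
    intro b v hb h
    have h' : v ^ (2 ^ k) * b = v * b ^ (2 ^ k) := hchar _ _ h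
    have hbq : b ^ (2 ^ k) ≠ 0 := pow_ne_zero _ hb
    have ht : (v * b⁻¹) ^ (2 ^ k) = v * b⁻¹ := by
      rw [mul_pow, inv_pow]
      field_simp
      linear_combination h'
    rcases lemA _ ht with h0 | h1
    · rcases mul_eq_zero.mp h0 with h0 | h0
      · exact Or.inl h0
      · exact absurd (inv_eq_zero.mp h0) hb
    · right
      field_simp at h1
      exact h1
  -- numeric facts
  have h4 : ∀ n : ℕ, 4 ^ n % 3 = 1 := by
    intro n
    rw [Nat.pow_mod]
    norm_num
  have kodd : k % 2 = 1 := by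
    rcases Nat.even_or_odd k with he | ho
    · exfalso
      have : 2 ∣ Nat.gcd k m := Nat.dvd_gcd he.two_dvd hme.two_dvd
      rw [hkm] at this
      omega
    · exact Nat.odd_iff.mp ho
  have h3q : 3 ∣ 2 ^ k + 1 := by
    obtain ⟨n, hn⟩ := Nat.odd_iff.mpr kodd
    have h2k : 2 ^ k = 2 * 4 ^ n := by
      rw [hn, pow_succ, pow_mul]
      ring
    have := h4 n
    omega
  have h3Q : 3 ∣ 2 ^ i - 1 := by
    obtain ⟨n, hn⟩ := hi
    have h2i : 2 ^ i = 4 ^ n := by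
      rw [hn, ← two_mul, pow_mul]
      norm_num
    have := h4 n
    omega
  -- main argument
  intro ab hab cd
  obtain ⟨a, b⟩ := ab
  obtain ⟨c, d⟩ := cd
  simp only [ne_eq, Prod.mk_eq_zero, not_and_or] at hab
  -- normalized membership equations
  have hmem : ∀ x y : F, f ((x, y) + (a, b)) + f (x, y) = (c, d) →
      x ^ (2 ^ k) * a + x * a ^ (2 ^ k) + a ^ (2 ^ k) * a +
        α * (y ^ (2 ^ k) * b + y * b ^ (2 ^ k) + b ^ (2 ^ k) * b) ^ (2 ^ i) = c ∧
      x * b + y * a + a * b = d := by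
    intro x y h
    rw [Prod.mk_add_mk, hf, hf, Prod.mk_add_mk, Prod.mk.injEq] at h
    obtain ⟨e1, e2⟩ := h
    simp only [pow_mul, pow_succ] at e1
    constructor
    · have hsplit : ((y + b) ^ (2 ^ k) * (y + b)) ^ (2 ^ i) =
          (y ^ (2 ^ k) * y) ^ (2 ^ i) +
            (y ^ (2 ^ k) * b + y * b ^ (2 ^ k) + b ^ (2 ^ k) * b) ^ (2 ^ i) := by
        rw [show (y + b) ^ (2 ^ k) * (y + b) =
            y ^ (2 ^ k) * y + (y ^ (2 ^ k) * b + y * b ^ (2 ^ k) + b ^ (2 ^ k) * b) from by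
          linear_combination (y + b) * F1 y b, FQ]
      linear_combination e1 - (x + a) * F1 x a - α * hsplit -
        (x ^ (2 ^ k) * x + α * (y ^ (2 ^ k) * y) ^ (2 ^ i)) * h2
    · linear_combination e2 - x * y * h2
  -- any two solutions differ by 0 or (a,b)
  have key : ∀ x1 y1 x2 y2 : F,
      f ((x1, y1) + (a, b)) + f (x1, y1) = (c, d) →
      f ((x2, y2) + (a, b)) + f (x2, y2) = (c, d) →
      (x2 = x1 ∧ y2 = y1) ∨ (x2 = x1 + a ∧ y2 = y1 + b) := by
    intro x1 y1 x2 y2 h1 h2'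
    obtain ⟨n1a, n2a⟩ := hmem x1 y1 h1
    obtain ⟨n1b, n2b⟩ := hmem x2 y2 h2'
    have key2 : b * (x1 + x2) + a * (y1 + y2) = 0 := by
      linear_combination n2a + n2b - (a * b - d) * h2
    have harg : (y1 ^ (2 ^ k) * b + y1 * b ^ (2 ^ k) + b ^ (2 ^ k) * b) +
        (y2 ^ (2 ^ k) * b + y2 * b ^ (2 ^ k) + b ^ (2 ^ k) * b) =
        (y1 + y2) ^ (2 ^ k) * b + (y1 + y2) * b ^ (2 ^ k) := by
      linear_combination (-b) * F1 y1 y2 + b ^ (2 ^ k) * b * h2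
    have hQsum : (y1 ^ (2 ^ k) * b + y1 * b ^ (2 ^ k) + b ^ (2 ^ k) * b) ^ (2 ^ i) +
        (y2 ^ (2 ^ k) * b + y2 * b ^ (2 ^ k) + b ^ (2 ^ k) * b) ^ (2 ^ i) =
        ((y1 + y2) ^ (2 ^ k) * b + (y1 + y2) * b ^ (2 ^ k)) ^ (2 ^ i) := by
      rw [← FQ, harg]
    have key1 : (x1 + x2) ^ (2 ^ k) * a + (x1 + x2) * a ^ (2 ^ k) +
        α * ((y1 + y2) ^ (2 ^ k) * b + (y1 + y2) * b ^ (2 ^ k)) ^ (2 ^ i) = 0 := by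
      linear_combination n1a + n1b - α * hQsum + a * F1 x1 x2 - (a ^ (2 ^ k) * a - c) * h2
    -- from (u,v) conclusion to the final form
    have conclude : (x1 + x2 = 0 ∧ y1 + y2 = 0) ∨ (x1 + x2 = a ∧ y1 + y2 = b) →
        (x2 = x1 ∧ y2 = y1) ∨ (x2 = x1 + a ∧ y2 = y1 + b) := by
      rintro (⟨hu, hv⟩ | ⟨hu, hv⟩)
      · exact Or.inl ⟨(hchar _ _ hu).symm, (hchar _ _ hv).symm⟩
      · refine Or.inr ⟨?_, ?_⟩
        · linear_combination hu - x1 * h2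
        · linear_combination hv - y1 * h2
    apply conclude
    by_cases hb : b = 0
    · have ha : a ≠ 0 := by tauto
      subst hb
      have hv : y1 + y2 = 0 := by
        rcases mul_eq_zero.mp (show a * (y1 + y2) = 0 from by linear_combination key2) with h | h
        · exact absurd h ha
        · exact h
      have hu' : (x1 + x2) ^ (2 ^ k) * a + (x1 + x2) * a ^ (2 ^ k) = 0 := by
        have h2k0 : (2 : ℕ) ^ k ≠ 0 := by positivity
        have h2i0 : (2 : ℕ) ^ i ≠ 0 := by positivity
        have hz : ((y1 + y2) ^ (2 ^ k) * 0 + (y1 + y2) * 0 ^ (2 ^ k)) ^ (2 ^ i) = 0 := by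
          rw [mul_zero, zero_pow h2k0, mul_zero, add_zero, zero_pow h2i0]
        rw [hz] at key1
        linear_combination key1
      rcases lemB a (x1 + x2) ha hu' with h | h
      · exact Or.inl ⟨h, hv⟩
      · exact Or.inr ⟨h, hv⟩
    · by_cases ha : a = 0
      · subst ha
        have hu : x1 + x2 = 0 := by
          rcases mul_eq_zero.mp (show b * (x1 + x2) = 0 from by linear_combination key2) with h | h
          · exact absurd h hb
          · exact h
        have hv' : (y1 + y2) ^ (2 ^ k) * b + (y1 + y2) * b ^ (2 ^ k) = 0 := by
          have h5 : α * ((y1 + y2) ^ (2 ^ k) * b + (y1 + y2) * b ^ (2 ^ k)) ^ (2 ^ i) = 0 := by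
            rw [hu] at key1
            have hz : (0 : F) ^ (2 ^ k) = 0 := zero_pow (by positivity)

            rw [hz] at key1
            linear_combination key1
          rcases mul_eq_zero.mp h5 with h | h
          · exact absurd h hα
          · exact pow_eq_zero_iff (show (2:ℕ) ^ i ≠ 0 by positivity) |>.mp h
        rcases lemB b (y1 + y2) hb hv' with h | h
        · exact Or.inl ⟨hu, h⟩
        · exact Or.inr ⟨hu, h⟩
      · -- both a, b nonzero
        have hbu : b * (x1 + x2) = a * (y1 + y2) := hchar _ _ key2
        have hqbu : b ^ (2 ^ k) * (x1 + x2) ^ (2 ^ k) = a ^ (2 ^ k) * (y1 + y2) ^ (2 ^ k) := by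
          have := congrArg (· ^ (2 ^ k)) hbu
          simpa [mul_pow] using this
        set w : F := (y1 + y2) ^ (2 ^ k) * b + (y1 + y2) * b ^ (2 ^ k) with hwdef
        have hw : a ^ (2 ^ k) * a * w + α * w ^ (2 ^ i) * (b ^ (2 ^ k) * b) = 0 := by
          rw [hwdef]
          linear_combination (b ^ (2 ^ k) * b) * key1 - a * b * hqbu -
            a ^ (2 ^ k) * b ^ (2 ^ k) * hbu
        by_cases hw0 : w = 0
        · rcases lemB b (y1 + y2) hb (by rw [← hwdef]; exact hw0) with h | h
          · left
            refine ⟨?_, h⟩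
            rcases mul_eq_zero.mp (show b * (x1 + x2) = 0 from by rw [hbu, h]; ring) with h' | h'
            · exact absurd h' hb
            · exact h'
          · right
            refine ⟨?_, h⟩
            have : b * (x1 + x2) = b * a := by rw [hbu, h]; ring
            exact mul_left_cancel₀ hb this
        · exfalso
          have hQpos : 0 < 2 ^ i := by positivity
          have hQs : 2 ^ i - 1 + 1 = 2 ^ i := Nat.succ_pred_eq_of_pos hQpos
          have heq' : (a ^ (2 ^ k) * a + α * w ^ (2 ^ i - 1) * (b ^ (2 ^ k) * b)) * w = 0 := by
            rw [← hQs, pow_succ] at hw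
            linear_combination hw
          have heq : a ^ (2 ^ k) * a + α * w ^ (2 ^ i - 1) * (b ^ (2 ^ k) * b) = 0 := by
            rcases mul_eq_zero.mp heq' with h | h
            · exact h
            · exact absurd h hw0
          have heq2 : a ^ (2 ^ k) * a = α * w ^ (2 ^ i - 1) * (b ^ (2 ^ k) * b) :=
            hchar _ _ heq
          obtain ⟨s, hs⟩ := h3q
          obtain ⟨r, hr⟩ := h3Q
          apply hcube
          refine ⟨a ^ s * (b ^ s)⁻¹ * (w ^ r)⁻¹, ?_⟩
          have ha3 : (a ^ s) ^ 3 = a ^ (2 ^ k) * a := by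
            rw [← pow_mul, show s * 3 = 2 ^ k + 1 from by rw [hs]; ring, pow_succ]
          have hb3 : (b ^ s) ^ 3 = b ^ (2 ^ k) * b := by
            rw [← pow_mul, show s * 3 = 2 ^ k + 1 from by rw [hs]; ring, pow_succ]
          have hw3 : (w ^ r) ^ 3 = w ^ (2 ^ i - 1) := by
            rw [← pow_mul, show r * 3 = 2 ^ i - 1 from by rw [hr]; ring]
          rw [mul_pow, mul_pow, inv_pow, inv_pow, ha3, hb3, hw3]
          have hbs : (b ^ s) ^ 3 ≠ 0 := by rw [hb3]; exact mul_ne_zero (pow_ne_zero _ hb) hb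
          have hws : w ^ (2 ^ i - 1) ≠ 0 := pow_ne_zero _ hw0
          rw [hb3] at hbs
          field_simp
          linear_combination heq2
  -- conclude the cardinality bound
  rcases Set.eq_empty_or_nonempty
      {X : F × F | f (X + (a, b)) + f X = (c, d)} with hS | ⟨⟨x1, y1⟩, hX1⟩
  · rw [hS]
    simp
  · have hX1' : f ((x1, y1) + (a, b)) + f (x1, y1) = (c, d) := hX1
    have hsub : {X : F × F | f (X + (a, b)) + f X = (c, d)} ⊆
        {(x1, y1), (x1 + a, y1 + b)} := by
      rintro ⟨x2, y2⟩ hX2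
      have hX2' : f ((x2, y2) + (a, b)) + f (x2, y2) = (c, d) := hX2
      rcases key x1 y1 x2 y2 hX1' hX2' with ⟨h1, h2'⟩ | ⟨h1, h2'⟩ <;>
        simp [h1, h2', Prod.ext_iff]
    refine le_trans (Set.ncard_le_ncard hsub (Set.toFinite _)) ?_
    refine le_trans (Set.ncard_insert_le _ _) ?_
    simp
end

section
/- Let p be an odd prime and f : F_{p^n} → F_{p^n} a planar function with f(0) = 0 such that f(x+y) − f(x) − f(y) is additive in each argument when the other is fixed (i.e., f is a Dembowski–Ostrom-type quadratic function). Define x*y = (f(x+y) − f(x) − f(y))/2. Then * is a commutative presemifield product: it is bi-additive, commutative, and has no zero divisors. -/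
theorem stmt_11 (p n : ℕ) (hp : p.Prime) (hodd : Odd p) (hn : 0 < n)
    (F : Type*) [Field F] [Fintype F] (hF : Fintype.card F = p ^ n)
    (f : F → F) (hf0 : f 0 = 0)
    (hplanar : ∀ a : F, a ≠ 0 → Function.Bijective (fun x : F => f (x + a) - f x))
    (hB : ∀ x x' y : F,
      f (x + x' + y) - f (x + x') - f y =
        (f (x + y) - f x - f y) + (f (x' + y) - f x' - f y))
    (mul : F → F → F)
    (hmul : ∀ x y : F, mul x y = (f (x + y) - f x - f y) / 2) :
    (∀ x x' y : F, mul (x + x') y = mul x y + mul x' y) ∧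
    (∀ x y y' : F, mul x (y + y') = mul x y + mul x y') ∧
    (∀ x y : F, mul x y = mul y x) ∧
    (∀ x y : F, mul x y = 0 → x = 0 ∨ y = 0) := by
  -- 2 ≠ 0 in F
  have hpF : (p : F) = 0 := by
    have hcard : ((Fintype.card F : ℕ) : F) = 0 := Nat.cast_card_eq_zero F
    rw [hF] at hcard
    push_cast at hcard
    exact pow_eq_zero_iff hn.ne' |>.mp hcard
  have h2 : (2 : F) ≠ 0 := by
    intro h2
    obtain ⟨k, hk⟩ := hodd
    have : ((2 * k + 1 : ℕ) : F) = 0 := by rw [← hk]; exact hpF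
    push_cast at this
    rw [h2] at this
    simp at this
  have hcomm : ∀ x y : F, mul x y = mul y x := by
    intro x y
    rw [hmul, hmul, add_comm]
    ring
  refine ⟨?_, ?_, hcomm, ?_⟩
  · intro x x' y
    rw [hmul, hmul, hmul, hB x x' y]
    ring
  · intro x y y'
    rw [hcomm x (y + y'), hcomm x y, hcomm x y']
    rw [hmul, hmul, hmul, hB y y' x]
    ring
  · intro x y h
    by_cases hx : x = 0
    · exact Or.inl hx
    · right
      have hinj := (hplanar x hx).injective
      have h0 : f (x + y) - f x - f y = 0 := by
        rw [hmul] at h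
        field_simp at h
        linear_combination h
      have : f (y + x) - f y = f (0 + x) - f 0 := by
        rw [zero_add, hf0, sub_zero, add_comm y x]
        linear_combination h0
      exact hinj this
end

section
/- Let p be an odd prime and m, k positive integers with m/gcd(m,k) odd. Then the set of nonzero values of x ↦ x^(p^k+1) on F_{p^m} equals the set of nonzero squares of F_{p^m}. -/
theorem Nat.gcd_pow_add_one_pow_sub_one_of_odd {p m k : ℕ} (hp : Odd p)
    (h : Odd (m / m.gcd k)) : (p ^ k + 1).gcd (p ^ m - 1) = 2 := by
  refine Nat.dvd_antisymm ?_ (Nat.dvd_gcd hp.pow.add_one.two_dvd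
    (Nat.Odd.sub_odd hp.pow odd_one).two_dvd)
  have h_sq : p ^ (2 * k) - 1 = (p ^ k + 1) * (p ^ k - 1) := by
    rw [mul_comm 2, pow_mul, ← Nat.sq_sub_sq, one_pow]
  have h_sub : (p ^ k + 1).gcd (p ^ m - 1) ∣ p ^ k - 1 :=
    calc (p ^ k + 1).gcd (p ^ m - 1) ∣ (p ^ (2 * k) - 1).gcd (p ^ m - 1) :=
          Nat.gcd_dvd_gcd_of_dvd_left _ ⟨_, h_sq⟩
      _ = p ^ k.gcd m - 1 := by
          rw [Nat.pow_sub_one_gcd_pow_sub_one, Nat.gcd_comm,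
            Nat.gcd_two_mul_right_of_odd_div_gcd h, Nat.gcd_comm]
      _ ∣ p ^ k - 1 := Nat.pow_sub_one_dvd_pow_sub_one p (Nat.gcd_dvd_left k m)
  have h_two := Nat.dvd_sub (Nat.gcd_dvd_left _ _) h_sub
  rwa [Nat.add_sub_sub_cancel (Nat.one_le_pow _ _ hp.pos)] at h_two

theorem exists_pow_eq_iff_exists_pow_gcd_card {G : Type*} [Group G] [Finite G] (a : ℕ)
    (y : G) :
    (∃ x, x ^ a = y) ↔ ∃ x, x ^ a.gcd (Nat.card G) = y := by
  constructor
  · rintro ⟨x, rfl⟩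
    exact ⟨x ^ (a / a.gcd (Nat.card G)), by
      rw [← pow_mul, Nat.div_mul_cancel (Nat.gcd_dvd_left _ _)]⟩
  · rintro ⟨x, rfl⟩
    refine ⟨x ^ a.gcdA (Nat.card G), ?_⟩
    rw [← zpow_natCast, ← zpow_mul, ← zpow_natCast, Nat.gcd_eq_gcd_ab, zpow_add,
      zpow_mul x (Nat.card G : ℤ), zpow_natCast x (Nat.card G), pow_card_eq_one', one_zpow,
      mul_one, mul_comm]

theorem exists_pow_eq_iff_exists_units_pow_eq {G₀ : Type*} [GroupWithZero G₀] {a : ℕ}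
    (ha : a ≠ 0) {y : G₀} (hy : y ≠ 0) :
    (∃ x : G₀, x ^ a = y) ↔ ∃ u : G₀ˣ, u ^ a = Units.mk0 y hy := by
  constructor
  · rintro ⟨x, rfl⟩
    have hx : x ≠ 0 := by rintro rfl; exact hy (zero_pow ha)
    exact ⟨Units.mk0 x hx, Units.ext (by simp)⟩
  · rintro ⟨u, hu⟩
    exact ⟨u, by simpa using congrArg Units.val hu⟩

theorem GroupWithZero.exists_pow_eq_iff_exists_pow_gcd_card {G₀ : Type*} [GroupWithZero G₀]
    [Finite G₀] {a : ℕ} (ha : a ≠ 0) {y : G₀} (hy : y ≠ 0) :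
    (∃ x, x ^ a = y) ↔ ∃ x, x ^ a.gcd (Nat.card G₀ˣ) = y := by
  rw [exists_pow_eq_iff_exists_units_pow_eq ha hy,
    _root_.exists_pow_eq_iff_exists_pow_gcd_card a,
    exists_pow_eq_iff_exists_units_pow_eq (Nat.gcd_ne_zero_left ha) hy]

theorem stmt_13_general (p m k : ℕ) (hodd : Odd p)
    (h : Odd (m / Nat.gcd m k))
    (F : Type*) [Field F] [Fintype F] (hF : Fintype.card F = p ^ m) :
    ∀ y : F, y ≠ 0 → ((∃ x : F, x ^ (p ^ k + 1) = y) ↔ IsSquare y) := by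
  classical
  intro y hy
  have h_card : Nat.card Fˣ = p ^ m - 1 := by
    rw [Nat.card_eq_fintype_card, Fintype.card_units, hF]
  rw [GroupWithZero.exists_pow_eq_iff_exists_pow_gcd_card (Nat.succ_ne_zero _) hy, h_card,
    Nat.gcd_pow_add_one_pow_sub_one_of_odd hodd h, isSquare_iff_exists_sq]
  exact exists_congr fun x ↦ eq_comm

theorem stmt_13 (p m k : ℕ) (hp : p.Prime) (hodd : Odd p)
    (hm : 0 < m) (hk : 0 < k) (h : Odd (m / Nat.gcd m k))
    (F : Type*) [Field F] [Fintype F] (hF : Fintype.card F = p ^ m) :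
    ∀ y : F, y ≠ 0 → ((∃ x : F, x ^ (p ^ k + 1) = y) ↔ IsSquare y) :=
  stmt_13_general p m k hodd h F hF
end

section
/- Let m ≥ 2 be even, k coprime to m, and let ∘ denote x∘y = x^(2^k)·y + y^(2^k)·x on F_{2^m}. Then for every nonzero a ∈ F_{2^m}, the equation x ∘ a = 0 has exactly the solutions x = 0 and x = a; equivalently x ↦ x^(2^k+1) is APN on F_{2^m}. -/
/-!
In characteristic 2 and for `a ≠ 0` the equation reads `(x / a) ^ 2 ^ k = x / a`. A nonzero
solution `u = x / a` then satisfies both `u ^ (2 ^ k - 1) = 1` and `u ^ (2 ^ m - 1) = 1`, hence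
`u ^ (2 ^ gcd k m - 1) = 1`, and `gcd k m = 1` forces `u = 1`.
-/

namespace FiniteField

variable {F : Type*} [Field F] [Fintype F]

theorem pow_sub_one_eq_one_of_pow_pow_eq_self_s17 {q m k : ℕ} (hF : Fintype.card F = q ^ m)
    (hkm : Nat.gcd k m = 1) {u : F} (hu0 : u ≠ 0) (hu : u ^ q ^ k = u) : u ^ (q - 1) = 1 := by
  have hq : 0 < q := by
    have hcard : 1 < q ^ m := hF ▸ Fintype.one_lt_card
    rcases m with _ | m
    · simp at hcard
    · exact zero_lt_one.trans ((Nat.one_lt_pow_iff m.succ_ne_zero).mp hcard)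
  have hk : u ^ (q ^ k - 1) = 1 := by
    refine mul_right_cancel₀ hu0 ?_
    rw [← pow_succ, Nat.sub_add_cancel (Nat.one_le_pow _ _ hq), hu, one_mul]
  have hm : u ^ (q ^ m - 1) = 1 := hF ▸ pow_card_sub_one_eq_one u hu0
  simpa [hkm] using pow_gcd_eq_one.mpr ⟨hk, hm⟩

theorem pow_two_pow_eq_self_iff {m k : ℕ} (hF : Fintype.card F = 2 ^ m)
    (hkm : Nat.gcd k m = 1) {u : F} : u ^ 2 ^ k = u ↔ u = 0 ∨ u = 1 := by
  constructor
  · intro hu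
    refine or_iff_not_imp_left.mpr fun hu0 => ?_
    simpa using pow_sub_one_eq_one_of_pow_pow_eq_self_s17 hF hkm hu0 hu
  · rintro (rfl | rfl) <;> simp

end FiniteField

theorem pow_mul_eq_pow_mul_iff_div_pow_eq_div {K : Type*} [Field K] {a : K} (ha : a ≠ 0)
    (x : K) (n : ℕ) : x ^ n * a = a ^ n * x ↔ (x / a) ^ n = x / a := by
  rw [div_pow, div_eq_div_iff (pow_ne_zero _ ha) ha, mul_comm (a ^ n)]

theorem stmt_17_general (m k : ℕ)
    (hkm : Nat.gcd k m = 1)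
    (F : Type*) [Field F] [Fintype F] (hF : Fintype.card F = 2 ^ m) :
    ∀ a : F, a ≠ 0 → ∀ x : F,
      x ^ (2 ^ k) * a + a ^ (2 ^ k) * x = 0 ↔ x = 0 ∨ x = a := by
  intro a ha x
  have : CharP F 2 := charP_of_card_eq_prime_pow hF
  rw [CharTwo.add_eq_zero, pow_mul_eq_pow_mul_iff_div_pow_eq_div ha,
    FiniteField.pow_two_pow_eq_self_iff hF hkm, div_eq_zero_iff, div_eq_one_iff_eq ha, or_iff_left ha]

theorem stmt_17 (m k : ℕ) (hm : 2 ≤ m) (hme : Even m) (hk : 0 < k)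
    (hkm : Nat.gcd k m = 1)
    (F : Type*) [Field F] [Fintype F] (hF : Fintype.card F = 2 ^ m) :
    ∀ a : F, a ≠ 0 → ∀ x : F,
      x ^ (2 ^ k) * a + a ^ (2 ^ k) * x = 0 ↔ x = 0 ∨ x = a :=
  stmt_17_general m k hkm F hF
end

section
/- Let p be an odd prime, m, k positive integers with m/gcd(m,k) odd, α a non-square in F_{p^m}, and σ a field automorphism of F_{p^m}. Then for all b, c, d ∈ F_{p^m} with d ≠ 0, b ≠ 0 and b/d + (b/d)^(p^k) ≠ 0, we have α ≠ (c·σ(d)^(−1))^(p^k+1)·(b/d + (b/d)^(p^k))^(1−σ), where u^(1−σ) = u·σ(u)^(−1). -/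
open scoped Classical

lemma nonsquare_mul_nonsquare {F : Type*} [Field F] [Fintype F] {a b : F}
    (ha : ¬ IsSquare a) (hb : ¬ IsSquare b) : IsSquare (a * b) := by
  have ha0 : a ≠ 0 := fun h => ha (h ▸ IsSquare.zero)
  have hb0 : b ≠ 0 := fun h => hb (h ▸ IsSquare.zero)
  have h1 : quadraticChar F a = -1 := (quadraticChar_neg_one_iff_not_isSquare).mpr ha
  have h2 : quadraticChar F b = -1 := (quadraticChar_neg_one_iff_not_isSquare).mpr hb
  have : quadraticChar F (a * b) = 1 := by
    rw [map_mul, h1, h2]; ring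
  exact (quadraticChar_one_iff_isSquare (mul_ne_zero ha0 hb0)).mp this

lemma isSquare_ratio {F : Type*} [Field F] [Fintype F] (σ : F ≃+* F) (w : F)
    (hw : w ≠ 0) : IsSquare (w * (σ w)⁻¹) := by
  by_cases h : IsSquare w
  · obtain ⟨y, hy⟩ := h
    exact ⟨y * (σ y)⁻¹, by rw [hy]; simp [map_mul]; ring⟩
  · have hσ : ¬ IsSquare ((σ w)⁻¹) := by
      rintro ⟨y, hy⟩
      apply h
      refine ⟨σ.symm y⁻¹, ?_⟩
      have : σ w = y⁻¹ * y⁻¹ := by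
        rw [← mul_inv, ← hy, inv_inv]
      apply_fun σ.symm at this
      simpa [map_mul] using this
    exact nonsquare_mul_nonsquare h hσ

theorem stmt_19 (p m k : ℕ) (hp : p.Prime) (hodd : Odd p)
    (hm : 0 < m) (hk : 0 < k) (h : Odd (m / Nat.gcd m k))
    (F : Type*) [Field F] [Fintype F] (hF : Fintype.card F = p ^ m)
    (α : F) (hα : ¬ IsSquare α) (σ : F ≃+* F) :
    ∀ b c d : F, d ≠ 0 → b ≠ 0 → b / d + (b / d) ^ (p ^ k) ≠ 0 →
      α ≠ (c * (σ d)⁻¹) ^ (p ^ k + 1) *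
        ((b / d + (b / d) ^ (p ^ k)) * (σ (b / d + (b / d) ^ (p ^ k)))⁻¹) := by
  intro b c d hd hb hw heq
  apply hα
  rw [heq]
  set w := b / d + (b / d) ^ (p ^ k) with hwdef
  have hpk : Odd (p ^ k) := hodd.pow
  obtain ⟨t, ht⟩ := hpk
  have h2 : p ^ k + 1 = 2 * (t + 1) := by omega
  have hsq1 : IsSquare ((c * (σ d)⁻¹) ^ (p ^ k + 1)) :=
    ⟨(c * (σ d)⁻¹) ^ (t + 1), by rw [← pow_add, h2]; ring_nf⟩
  exact hsq1.mul (isSquare_ratio σ w hw)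
end
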